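/- arXiv:1002.4883 — 2 statements merged into one kernel-verified Lean document; each statement's English description precedes it below -/
import Mathlib

section
/- Let g be a holomorphic function on the open unit disk 𝔻 with Re g(z) ≥ 0 for all z ∈ 𝔻, and let ζ be a point of the unit circle ∂𝔻. Then the angular limit ℓ := ∠lim_{z→ζ} (1/2)·(1 − conj(ζ)·z)·g(z) exists and is a nonnegative real number, and moreover Re g(z) ≥ ℓ·(1 − |z|²)/|z − ζ|² for every z ∈ 𝔻. -/
/-!
Let `ℓ` be the largest constant with `ℓ P(z, ζ) ≤ Re g(z)` on the disc, `P` the Poisson kernel;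
this gives the inequality. Subtracting `ℓ` times the Herglotz kernel `(ζ + z)/(ζ - z)` (whose real
part is `P`) leaves a function `G` with `Re G ≥ 0` and `inf Re G / P = 0`. The Schwarz–Pick lemma
for maps into the right half-plane gives the Harnack-type bound
`|G w| ≤ 4 Re G(z) |1 - z̄ w|² / ((1 - |w|²)(1 - |z|²)) + |G z|`, and in a Stolz angle
`|ζ - w| ≤ M (1 - |w|²)`; choosing `z` with `Re G(z) / P(z, ζ)` small shows `(ζ - w) G(w) → 0`.
Since `(1 - ζ̄ w) g(w) = ζ̄ (ζ - w) G(w) + ℓ ζ̄ (ζ + w)`, the angular limit is `ℓ`.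
-/

open Complex Filter Metric Finset

noncomputable section

/-- The Stolz angle at a boundary point `ζ` with opening parameter `M`. -/
def StolzAngle (ζ : ℂ) (M : ℝ) : Set ℂ :=
  {z : ℂ | ‖z‖ < 1 ∧ ‖ζ - z‖ < M * (1 - ‖z‖)}

/-- Angular (nontangential) limit of `h` at `ζ` equals `L`: within every Stolz
angle `S(ζ, M)`, `M > 1`, the function tends to `L`. -/
def AngularLimit (h : ℂ → ℂ) (ζ : ℂ) (L : ℂ) : Prop :=
  ∀ M : ℝ, 1 < M → Tendsto h (nhdsWithin ζ (StolzAngle ζ M)) (nhds L)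

/-- Angular limit of `h` at `ζ` is `∞`: `|h|` tends to `+∞` within every Stolz angle. -/
def AngularLimitInfty (h : ℂ → ℂ) (ζ : ℂ) : Prop :=
  ∀ M : ℝ, 1 < M → Tendsto (fun z => ‖h z‖) (nhdsWithin ζ (StolzAngle ζ M)) atTop

open ComplexConjugate Topology

theorem sq_norm_one_sub_conj_mul (w z : ℂ) :
    ‖1 - conj w * z‖ ^ 2 = ‖w - z‖ ^ 2 + (1 - ‖w‖ ^ 2) * (1 - ‖z‖ ^ 2) := by
  simp only [← normSq_eq_norm_sq, normSq_apply, sub_re, sub_im, mul_re, mul_im, one_re, one_im,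
    conj_re, conj_im]
  ring

theorem norm_one_sub_conj_mul_of_norm_eq_one {ζ : ℂ} (hζ : ‖ζ‖ = 1) (z : ℂ) :
    ‖1 - conj z * ζ‖ = ‖ζ - z‖ := by
  refine (pow_left_inj₀ (norm_nonneg _) (norm_nonneg _) two_ne_zero).1 ?_
  rw [sq_norm_one_sub_conj_mul, hζ, norm_sub_rev]
  ring

theorem sq_norm_add_conj (a b : ℂ) : ‖a + conj b‖ ^ 2 = ‖a - b‖ ^ 2 + 4 * a.re * b.re := by
  simp only [← normSq_eq_norm_sq, normSq_apply, sub_re, sub_im, add_re, add_im, conj_re, conj_im]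
  ring

theorem norm_sub_lt_norm_one_sub_conj_mul {w z : ℂ} (hw : ‖w‖ < 1) (hz : ‖z‖ < 1) :
    ‖w - z‖ < ‖1 - conj w * z‖ := by
  have : 0 < (1 - ‖w‖ ^ 2) * (1 - ‖z‖ ^ 2) := by
    apply mul_pos <;> nlinarith [norm_nonneg w, norm_nonneg z]
  refine pow_lt_pow_iff_left₀ (norm_nonneg _) (norm_nonneg _) two_ne_zero |>.1 ?_
  linarith [sq_norm_one_sub_conj_mul w z]

theorem one_sub_conj_mul_ne_zero {w z : ℂ} (hw : ‖w‖ < 1) (hz : ‖z‖ < 1) :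
    1 - conj w * z ≠ 0 :=
  norm_pos_iff.1 <| (norm_nonneg _).trans_lt (norm_sub_lt_norm_one_sub_conj_mul hw hz)

def mobius (w z : ℂ) : ℂ := (w - z) / (1 - conj w * z)

theorem mobius_zero (w : ℂ) : mobius w 0 = w := by simp [mobius]

theorem norm_mobius (w z : ℂ) : ‖mobius w z‖ = ‖w - z‖ / ‖1 - conj w * z‖ := norm_div _ _

theorem mapsTo_mobius {w : ℂ} (hw : ‖w‖ < 1) : Set.MapsTo (mobius w) (ball 0 1) (ball 0 1) := by
  intro z hz
  rw [mem_ball_zero_iff] at hz ⊢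
  rw [norm_mobius, div_lt_one ((norm_nonneg _).trans_lt (norm_sub_lt_norm_one_sub_conj_mul hw hz))]
  exact norm_sub_lt_norm_one_sub_conj_mul hw hz

theorem differentiableOn_mobius {w : ℂ} (hw : ‖w‖ < 1) :
    DifferentiableOn ℂ (mobius w) (ball 0 1) :=
  .div (by fun_prop) (by fun_prop) fun z hz ↦ one_sub_conj_mul_ne_zero hw (mem_ball_zero_iff.1 hz)

theorem mobius_mobius {w z : ℂ} (hw : ‖w‖ < 1) (hz : ‖z‖ < 1) : mobius w (mobius w z) = z := by
  have hwz := one_sub_conj_mul_ne_zero hw hz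
  have hww := one_sub_conj_mul_ne_zero hw hw
  have hnum : w - mobius w z = z * (1 - conj w * w) / (1 - conj w * z) := by
    rw [mobius, eq_div_iff hwz, sub_mul, div_mul_cancel₀ _ hwz]
    ring
  have hden : 1 - conj w * mobius w z = (1 - conj w * w) / (1 - conj w * z) := by
    rw [mobius, eq_div_iff hwz, sub_mul, mul_assoc, div_mul_cancel₀ _ hwz]
    ring
  rw [mobius, hnum, hden, div_div_div_cancel_right₀ hwz, mul_div_cancel_right₀ z hww]

theorem norm_sub_le_norm_add_conj {a b : ℂ} (ha : 0 ≤ a.re) (hb : 0 ≤ b.re) :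
    ‖a - b‖ ≤ ‖a + conj b‖ := by
  refine pow_le_pow_iff_left₀ (norm_nonneg _) (norm_nonneg _) two_ne_zero |>.1 ?_
  rw [sq_norm_add_conj]
  nlinarith

theorem add_conj_ne_zero {a b : ℂ} (ha : 0 ≤ a.re) (hb : 0 < b.re) : a + conj b ≠ 0 := by
  intro h
  have := congrArg re h
  simp only [add_re, conj_re, zero_re] at this
  linarith

section RightHalfPlane

variable {G : ℂ → ℂ} {z w : ℂ}

theorem norm_sub_le_norm_mobius_mul_of_re_pos (hG : DifferentiableOn ℂ G (ball 0 1))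
    (hRe : ∀ z ∈ ball (0 : ℂ) 1, 0 < (G z).re) (hz : z ∈ ball 0 1) (hw : w ∈ ball 0 1) :
    ‖G z - G w‖ ≤ ‖mobius w z‖ * ‖G z + conj (G w)‖ := by
  have hw' := mem_ball_zero_iff.1 hw
  have hGw := hRe w hw
  have hφ := mapsTo_mobius hw'
  have hGφ := hG.comp (differentiableOn_mobius hw') hφ
  have hne : ∀ u ∈ ball (0 : ℂ) 1, G (mobius w u) + conj (G w) ≠ 0 := fun u hu ↦
    add_conj_ne_zero (hRe _ (hφ hu)).le hGw
  -- Schwarz's lemma for the map `𝔻 → 𝔻` sending `0` to `0`, obtained by moving `w` to `0` and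
  -- mapping the right half-plane to the disc with `G w` going to `0`.
  have hschwarz := Complex.norm_le_norm_of_mapsTo_ball (z := mobius w z)
    (f := fun u ↦ (G (mobius w u) - G w) / (G (mobius w u) + conj (G w)))
    ((hGφ.sub_const _).div (hGφ.add_const _) hne)
    (fun u hu ↦ mem_closedBall_zero_iff.2 <| by
      rw [norm_div, div_le_one (norm_pos_iff.2 (hne u hu))]
      exact norm_sub_le_norm_add_conj (hRe _ (hφ hu)).le hGw.le)
    (by simp [mobius_zero]) (mem_ball_zero_iff.1 (hφ hz))
  rwa [mobius_mobius hw' (mem_ball_zero_iff.1 hz), norm_div,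
    div_le_iff₀ (norm_pos_iff.2 (add_conj_ne_zero (hRe z hz).le hGw))] at hschwarz

theorem schwarzPick_of_re_pos (hG : DifferentiableOn ℂ G (ball 0 1))
    (hRe : ∀ z ∈ ball (0 : ℂ) 1, 0 < (G z).re) (hz : z ∈ ball 0 1) (hw : w ∈ ball 0 1) :
    (1 - ‖z‖ ^ 2) * (1 - ‖w‖ ^ 2) * ‖G z + conj (G w)‖ ^ 2 ≤
      4 * (G z).re * (G w).re * ‖1 - conj w * z‖ ^ 2 := by
  have hD := norm_sub_lt_norm_one_sub_conj_mul (mem_ball_zero_iff.1 hw) (mem_ball_zero_iff.1 hz)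
  have h := norm_sub_le_norm_mobius_mul_of_re_pos hG hRe hz hw
  rw [norm_mobius, div_mul_eq_mul_div, le_div_iff₀ ((norm_nonneg _).trans_lt hD)] at h
  have h2 := pow_le_pow_left₀ (by positivity) h 2
  rw [mul_pow, mul_pow, sq_norm_one_sub_conj_mul, sq_norm_add_conj] at h2
  rw [sq_norm_one_sub_conj_mul, sq_norm_add_conj]
  linear_combination h2

theorem schwarzPick_of_re_nonneg (hG : DifferentiableOn ℂ G (ball 0 1))
    (hRe : ∀ z ∈ ball (0 : ℂ) 1, 0 ≤ (G z).re) (hz : z ∈ ball 0 1) (hw : w ∈ ball 0 1) :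
    (1 - ‖z‖ ^ 2) * (1 - ‖w‖ ^ 2) * ‖G z + conj (G w)‖ ^ 2 ≤
      4 * (G z).re * (G w).re * ‖1 - conj w * z‖ ^ 2 := by
  -- apply the strict version to `G + δ` and let `δ → 0`
  have hδ : Set.Ioi 0 ⊆ {δ : ℝ | (1 - ‖z‖ ^ 2) * (1 - ‖w‖ ^ 2) * ‖G z + δ + conj (G w + δ)‖ ^ 2 ≤
      4 * (G z + δ).re * (G w + δ).re * ‖1 - conj w * z‖ ^ 2} := fun δ hδ ↦
    schwarzPick_of_re_pos (G := fun u ↦ G u + δ) (hG.add_const _)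
      (fun u hu ↦ by simpa using add_pos_of_nonneg_of_pos (hRe u hu) hδ) hz hw
  have hclosed := (isClosed_le ?_ ?_).closure_subset_iff.2 hδ
  · simpa using hclosed (by simp : (0 : ℝ) ∈ closure (Set.Ioi 0))
  all_goals fun_prop

theorem norm_apply_le_of_re_nonneg (hG : DifferentiableOn ℂ G (ball 0 1))
    (hRe : ∀ z ∈ ball (0 : ℂ) 1, 0 ≤ (G z).re) (hz : z ∈ ball 0 1) (hw : w ∈ ball 0 1) :
    ‖G w‖ ≤ 4 * (G z).re * ‖1 - conj z * w‖ ^ 2 / ((1 - ‖w‖ ^ 2) * (1 - ‖z‖ ^ 2)) + ‖G z‖ := by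
  have hP : 0 < (1 - ‖w‖ ^ 2) * (1 - ‖z‖ ^ 2) := by
    rw [mem_ball_zero_iff] at hz hw
    apply mul_pos <;> nlinarith [norm_nonneg w, norm_nonneg z]
  have hK : 0 ≤ 4 * (G z).re * ‖1 - conj z * w‖ ^ 2 := by have := hRe z hz; positivity
  have hX : (1 - ‖w‖ ^ 2) * (1 - ‖z‖ ^ 2) * ‖G w + conj (G z)‖ ≤
      4 * (G z).re * ‖1 - conj z * w‖ ^ 2 := by
    have hSP := schwarzPick_of_re_nonneg hG hRe hw hz
    have hre : (G w).re ≤ ‖G w + conj (G z)‖ :=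
      le_trans (by simpa using hRe z hz) (re_le_norm _)
    rcases (norm_nonneg (G w + conj (G z))).eq_or_lt with hX0 | hX0
    · rwa [← hX0, mul_zero]
    · refine le_of_mul_le_mul_right ?_ hX0
      nlinarith [mul_nonneg (sub_nonneg.2 hre) hK]
  calc ‖G w‖ ≤ ‖G w + conj (G z)‖ + ‖G z‖ := by
        simpa using norm_sub_le (G w + conj (G z)) (conj (G z))
    _ ≤ _ := by
      gcongr
      rwa [le_div_iff₀' hP]

end RightHalfPlane

section StolzAngle

variable {ζ w : ℂ} {M : ℝ}

theorem mem_ball_of_mem_stolzAngle (hw : w ∈ StolzAngle ζ M) : w ∈ ball (0 : ℂ) 1 :=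
  mem_ball_zero_iff.2 hw.1

theorem norm_sub_le_mul_of_mem_stolzAngle (hw : w ∈ StolzAngle ζ M) :
    ‖ζ - w‖ ≤ M * (1 - ‖w‖ ^ 2) := by
  obtain ⟨hw1, hwM⟩ := hw
  have hM : 0 < M := pos_of_mul_pos_left ((norm_nonneg _).trans_lt hwM) (by linarith)
  nlinarith [mul_nonneg hM.le (mul_nonneg (norm_nonneg w) (sub_nonneg.2 hw1.le))]

theorem tendsto_sub_mul_nhdsWithin_stolzAngle {G : ℂ → ℂ} (hG : DifferentiableOn ℂ G (ball 0 1))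
    (hRe : ∀ z ∈ ball (0 : ℂ) 1, 0 ≤ (G z).re) (hζ : ‖ζ‖ = 1) (hM : 0 < M)
    (hsmall : ∀ c > 0, ∃ z ∈ ball (0 : ℂ) 1, (G z).re * ‖ζ - z‖ ^ 2 < c * (1 - ‖z‖ ^ 2)) :
    Tendsto (fun w ↦ (ζ - w) * G w) (𝓝[StolzAngle ζ M] ζ) (𝓝 0) := by
  rw [NormedAddGroup.tendsto_nhds_zero]
  intro ε hε
  obtain ⟨z, hz, hGz⟩ := hsmall (ε / (4 * M)) (by positivity)
  have hPz : 0 < 1 - ‖z‖ ^ 2 := by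
    have := mem_ball_zero_iff.1 hz
    nlinarith [norm_nonneg z]
  set B : ℂ → ℝ := fun w ↦
    M * (4 * (G z).re * ‖1 - conj z * w‖ ^ 2 / (1 - ‖z‖ ^ 2)) + ‖ζ - w‖ * ‖G z‖ with hB
  have hBζ : B ζ < ε := by
    simp only [hB, norm_one_sub_conj_mul_of_norm_eq_one hζ, sub_self, norm_zero, zero_mul,
      add_zero]
    rw [mul_div_assoc', div_lt_iff₀ hPz]
    calc M * (4 * (G z).re * ‖ζ - z‖ ^ 2) = 4 * M * ((G z).re * ‖ζ - z‖ ^ 2) := by ring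
      _ < 4 * M * (ε / (4 * M) * (1 - ‖z‖ ^ 2)) := by gcongr
      _ = ε * (1 - ‖z‖ ^ 2) := by field_simp
  have hBcont : ContinuousAt B ζ := by fun_prop
  filter_upwards [nhdsWithin_le_nhds (hBcont.eventually (gt_mem_nhds hBζ)),
    self_mem_nhdsWithin] with w hBw hw
  have hPw : 0 < 1 - ‖w‖ ^ 2 := by
    have := hw.1
    nlinarith [norm_nonneg w]
  calc ‖(ζ - w) * G w‖
      ≤ ‖ζ - w‖ * (4 * (G z).re * ‖1 - conj z * w‖ ^ 2 / ((1 - ‖w‖ ^ 2) * (1 - ‖z‖ ^ 2)) +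
          ‖G z‖) := by
        rw [norm_mul]
        gcongr
        exact norm_apply_le_of_re_nonneg hG hRe hz (mem_ball_of_mem_stolzAngle hw)
    _ = ‖ζ - w‖ / (1 - ‖w‖ ^ 2) * (4 * (G z).re * ‖1 - conj z * w‖ ^ 2 / (1 - ‖z‖ ^ 2)) +
          ‖ζ - w‖ * ‖G z‖ := by
        field_simp
    _ ≤ B w := by
        simp only [hB]
        gcongr
        · have := hRe z hz; positivity
        · exact (div_le_iff₀ hPw).2 (norm_sub_le_mul_of_mem_stolzAngle hw)
    _ < ε := hBw

end StolzAngle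

section PoissonKernel

variable {ζ : ℂ}

theorem poissonKernel_zero_of_norm_eq_one (hζ : ‖ζ‖ = 1) (z : ℂ) :
    poissonKernel 0 z ζ = (1 - ‖z‖ ^ 2) / ‖z - ζ‖ ^ 2 := by
  simp [poissonKernel, hζ, norm_sub_rev]

theorem ne_of_mem_ball_of_norm_eq_one (hζ : ‖ζ‖ = 1) {z : ℂ} (hz : z ∈ ball (0 : ℂ) 1) :
    z ≠ ζ := by
  rintro rfl
  simp [hζ] at hz

theorem poissonKernel_zero_pos (hζ : ‖ζ‖ = 1) {z : ℂ} (hz : z ∈ ball (0 : ℂ) 1) :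
    0 < poissonKernel 0 z ζ := by
  have hzζ := sub_ne_zero.2 (ne_of_mem_ball_of_norm_eq_one hζ hz)
  rw [mem_ball_zero_iff] at hz
  rw [poissonKernel_zero_of_norm_eq_one hζ]
  have : 0 < 1 - ‖z‖ ^ 2 := by nlinarith [norm_nonneg z]
  positivity

theorem lt_mul_poissonKernel_zero_iff (hζ : ‖ζ‖ = 1) {z : ℂ} (hz : z ∈ ball (0 : ℂ) 1)
    {a c : ℝ} : a < c * poissonKernel 0 z ζ ↔ a * ‖ζ - z‖ ^ 2 < c * (1 - ‖z‖ ^ 2) := by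
  have : 0 < ‖ζ - z‖ := norm_pos_iff.2 (sub_ne_zero.2 (ne_of_mem_ball_of_norm_eq_one hζ hz).symm)
  rw [poissonKernel_zero_of_norm_eq_one hζ, norm_sub_rev, mul_div_assoc',
    lt_div_iff₀ (by positivity)]

theorem differentiableOn_herglotzRieszKernel_zero (hζ : ‖ζ‖ = 1) :
    DifferentiableOn ℂ (fun z ↦ herglotzRieszKernel 0 z ζ) (ball 0 1) := by
  simp only [herglotzRieszKernel_def, sub_zero]
  exact .div (by fun_prop) (by fun_prop) fun z hz ↦
    sub_ne_zero.2 (ne_of_mem_ball_of_norm_eq_one hζ hz).symm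

theorem tendsto_of_tendsto_sub_mul_sub_herglotzRieszKernel {g : ℂ → ℂ} {ℓ : ℂ} {s : Set ℂ}
    (hζ : ‖ζ‖ = 1) (hs : ζ ∉ s)
    (h : Tendsto (fun z ↦ (ζ - z) * (g z - ℓ * herglotzRieszKernel 0 z ζ)) (𝓝[s] ζ) (𝓝 0)) :
    Tendsto (fun z ↦ (1 / 2 : ℂ) * (1 - conj ζ * z) * g z) (𝓝[s] ζ) (𝓝 ℓ) := by
  have hζζ : conj ζ * ζ = 1 := by
    rw [← normSq_eq_conj_mul_self, normSq_eq_norm_sq, hζ]; norm_num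
  have hlin : Tendsto (fun z ↦ ℓ / 2 * conj ζ * (ζ + z)) (𝓝[s] ζ) (𝓝 ℓ) :=
    (Continuous.tendsto' (by fun_prop) ζ ℓ (by linear_combination ℓ * hζζ)).mono_left
      nhdsWithin_le_nhds
  refine ((h.const_mul (conj ζ / 2)).add hlin).congr' ?_ |>.trans (by simp)
  filter_upwards [self_mem_nhdsWithin] with z hz
  have hζz : ζ - z ≠ 0 := sub_ne_zero.2 fun h ↦ hs (h ▸ hz)
  simp only [herglotzRieszKernel_def, sub_zero]
  field_simp
  linear_combination g z * hζζ

end PoissonKernel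

/-- Lemma `l.JWC`: for a holomorphic `g` on the unit disk with
`Re g ≥ 0`, and `ζ` on the unit circle, the angular limit
`ℓ = ∠lim (1/2)(1 - conj ζ · z) g(z)` exists, is a nonnegative real, and
`Re g(z) ≥ ℓ (1 - |z|²)/|z - ζ|²` on the disk. -/
theorem stmt0 (g : ℂ → ℂ)
    (hg : DifferentiableOn ℂ g (ball (0:ℂ) 1))
    (hre : ∀ z ∈ ball (0:ℂ) 1, 0 ≤ (g z).re)
    (ζ : ℂ) (hζ : ‖ζ‖ = 1) :
    ∃ ℓ : ℝ, 0 ≤ ℓ ∧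
      AngularLimit (fun z => (1/2 : ℂ) * (1 - (starRingEnd ℂ) ζ * z) * g z) ζ (ℓ : ℂ) ∧
      ∀ z ∈ ball (0:ℂ) 1,
        ℓ * ((1 - ‖z‖ ^ 2) / ‖z - ζ‖ ^ 2) ≤ (g z).re := by
  have hP := fun z (hz : z ∈ ball (0 : ℂ) 1) ↦ poissonKernel_zero_pos hζ hz
  set S := (fun z ↦ (g z).re / poissonKernel 0 z ζ) '' ball 0 1
  have h0 : 0 ∈ lowerBounds S := by
    rintro _ ⟨z, hz, rfl⟩
    exact div_nonneg (hre z hz) (hP z hz).le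
  obtain ⟨ℓ, hℓ⟩ := Real.exists_isGLB ((nonempty_ball.2 one_pos).image _) ⟨0, h0⟩
  have hle : ∀ z ∈ ball (0 : ℂ) 1, ℓ * poissonKernel 0 z ζ ≤ (g z).re := fun z hz ↦
    (le_div_iff₀ (hP z hz)).1 (hℓ.1 (Set.mem_image_of_mem _ hz))
  refine ⟨ℓ, hℓ.2 h0, fun M hM ↦ ?_, fun z hz ↦ poissonKernel_zero_of_norm_eq_one hζ z ▸ hle z hz⟩
  set G : ℂ → ℂ := fun z ↦ g z - ℓ * herglotzRieszKernel 0 z ζ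
  have hGre : ∀ z, (G z).re = (g z).re - ℓ * poissonKernel 0 z ζ := fun z ↦ by
    simp [G, poissonKernel_eq_re_herglotzRieszKernel]
  refine tendsto_of_tendsto_sub_mul_sub_herglotzRieszKernel hζ (fun h ↦ h.1.ne hζ) <|
    tendsto_sub_mul_nhdsWithin_stolzAngle
      (hg.sub ((differentiableOn_herglotzRieszKernel_zero hζ).const_mul _))
      (fun z hz ↦ by rw [hGre, sub_nonneg]; exact hle z hz) hζ (by linarith) fun c hc ↦ ?_
  obtain ⟨_, ⟨z, hz, rfl⟩, -, hlt⟩ := hℓ.exists_between (lt_add_of_pos_right ℓ hc)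
  refine ⟨z, hz, (lt_mul_poissonKernel_zero_iff hζ hz).1 ?_⟩
  linarith [hGre z, (div_lt_iff₀ (hP z hz)).1 hlt]
end
end

section
/- Let f(z) = −(1 − z)²·p(z) where p is holomorphic on 𝔻 with Re p(z) ≥ 0 for all z ∈ 𝔻 (so f is a holomorphic generator with Denjoy–Wolff point a = 1), and let ζ ∈ ∂𝔻 with ζ ≠ 1 be a boundary regular null point of f with angular derivative f'(ζ) = ∠lim_{z→ζ} f(z)/(z − ζ) a negative real number. Define G(z) = 1/f(z) − (1/|f'(ζ)|)·(1/(z − 1) − 1/(z − ζ)) for z ∈ 𝔻 with f(z) ≠ 0. Then Re(−(z − 1)²·G(z)) ≥ 0 for all z ∈ 𝔻 with f(z) ≠ 0 (so, unless G vanishes identically, h := 1/G is again a holomorphic generator with Denjoy–Wolff point 1), and the angular limit ∠lim_{z→ζ} (z − ζ)·G(z) = 0 (equivalently, ∠lim_{z→ζ} h(z)/(z − ζ) = ∞, so ζ is not a boundary regular null point of h). -/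
/-!
With `q = 1 / p`, the function `-(z - 1)² G(z)` equals `q(z) + (z - 1)(1 - ζ) / (|m| (z - ζ))`, and
for `|ζ| = 1` the real part of the second term is `-σ (1 - |z|²) / |ζ - z|²` with
`σ = |1 - ζ|² / (2|m|)`. Boundary regularity of `ζ` gives `(1 - r) q(rζ) → 2σ` as `r → 1⁻`; in
particular `Re p > 0` (otherwise `p` would be constant by the maximum principle), and Julia's
lemma for maps of the disc into the right half-plane yields `Re q(z) ≥ σ (1 - |z|²) / |ζ - z|²`.
The angular limit is immediate:
`(z - ζ) G(z) = (f(z) / (z - ζ))⁻¹ - ((z - ζ) / (z - 1) - 1) / |m| → 1 / m + 1 / |m| = 0`.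
-/

open Complex Filter Metric Finset

noncomputable section

open Topology ComplexConjugate

lemma sq_norm_add_conj_sub_sq_norm_sub (w v : ℂ) :
    ‖w + conj v‖ ^ 2 - ‖w - v‖ ^ 2 = 4 * w.re * v.re := by
  simp only [Complex.sq_norm, normSq_apply, add_re, add_im, sub_re, sub_im, conj_re, conj_im]
  ring

lemma sq_norm_one_sub_conj_mul_sub_sq_norm_sub (a z : ℂ) :
    ‖1 - conj a * z‖ ^ 2 - ‖z - a‖ ^ 2 = (1 - ‖a‖ ^ 2) * (1 - ‖z‖ ^ 2) := by
  simp only [Complex.sq_norm, normSq_apply, sub_re, sub_im, conj_re, conj_im,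
    mul_re, mul_im, one_re, one_im]
  ring

def diskMobius (a u : ℂ) : ℂ := (u + a) / (1 + conj a * u)

lemma one_add_conj_mul_ne_zero {a u : ℂ} (ha : a ∈ ball (0 : ℂ) 1) (hu : u ∈ ball (0 : ℂ) 1) :
    1 + conj a * u ≠ 0 := by
  rw [mem_ball_zero_iff] at ha hu
  intro h
  have : ‖conj a * u‖ = 1 := by rw [eq_neg_of_add_eq_zero_right h, norm_neg, norm_one]
  rw [norm_mul, RCLike.norm_conj] at this
  nlinarith [norm_nonneg a, norm_nonneg u]

lemma one_sub_conj_mul_ne_zero_s1 {a u : ℂ} (ha : a ∈ ball (0 : ℂ) 1) (hu : u ∈ ball (0 : ℂ) 1) :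
    1 - conj a * u ≠ 0 := by
  simpa [sub_eq_add_neg] using one_add_conj_mul_ne_zero (a := -a) (by simpa using ha) hu

lemma diskMobius_mem_ball {a u : ℂ} (ha : a ∈ ball (0 : ℂ) 1) (hu : u ∈ ball (0 : ℂ) 1) :
    diskMobius a u ∈ ball (0 : ℂ) 1 := by
  have hd := one_add_conj_mul_ne_zero ha hu
  rw [mem_ball_zero_iff] at *
  have key := sq_norm_one_sub_conj_mul_sub_sq_norm_sub (-a) u
  simp only [map_neg, neg_mul, sub_neg_eq_add, norm_neg] at key
  rw [diskMobius, norm_div, div_lt_one (norm_pos_iff.2 hd), ← sq_lt_sq₀ (norm_nonneg _)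
    (norm_nonneg _)]
  have ha2 : ‖a‖ ^ 2 < 1 := by nlinarith [norm_nonneg a]
  have hu2 : ‖u‖ ^ 2 < 1 := by nlinarith [norm_nonneg u]
  nlinarith [mul_pos (sub_pos.2 ha2) (sub_pos.2 hu2)]

lemma differentiableOn_diskMobius {a : ℂ} (ha : a ∈ ball (0 : ℂ) 1) :
    DifferentiableOn ℂ (diskMobius a) (ball 0 1) :=
  DifferentiableOn.div (by fun_prop) (by fun_prop) fun _ hu => one_add_conj_mul_ne_zero ha hu

lemma diskMobius_zero (a : ℂ) : diskMobius a 0 = a := by simp [diskMobius]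

lemma diskMobius_neg (a z : ℂ) : diskMobius (-a) z = (z - a) / (1 - conj a * z) := by
  simp [diskMobius, sub_eq_add_neg]

lemma diskMobius_diskMobius_neg {a z : ℂ} (ha : a ∈ ball (0 : ℂ) 1) (hz : z ∈ ball (0 : ℂ) 1) :
    diskMobius a (diskMobius (-a) z) = z := by
  have h1 := one_sub_conj_mul_ne_zero_s1 ha hz
  have h2 := one_sub_conj_mul_ne_zero_s1 ha ha
  have hnum : (z - a) / (1 - conj a * z) + a = z * (1 - conj a * a) / (1 - conj a * z) := by
    rw [div_add' _ _ _ h1]; ring_nf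
  have hden : 1 + conj a * ((z - a) / (1 - conj a * z)) =
      (1 - conj a * a) / (1 - conj a * z) := by
    rw [mul_div_assoc', add_div' _ _ _ h1]; ring_nf
  rw [diskMobius_neg, diskMobius, hnum, hden, div_div_div_cancel_right₀ h1,
    mul_div_cancel_right₀ _ h2]

lemma norm_sub_le_norm_add_conj_s1 {w v : ℂ} (hw : 0 ≤ w.re) (hv : 0 ≤ v.re) :
    ‖w - v‖ ≤ ‖w + conj v‖ := by
  have := sq_norm_add_conj_sub_sq_norm_sub w v
  exact (pow_le_pow_iff_left₀ (norm_nonneg _) (norm_nonneg _) two_ne_zero).1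
    (by nlinarith [mul_nonneg hw hv])

-- The Schwarz–Pick lemma for holomorphic maps of the disc into the right half-plane.
theorem sq_norm_add_conj_mul_le_of_re_pos {q : ℂ → ℂ} (hq : DifferentiableOn ℂ q (ball 0 1))
    (hre : ∀ z ∈ ball (0 : ℂ) 1, 0 < (q z).re) {z a : ℂ} (hz : z ∈ ball (0 : ℂ) 1)
    (ha : a ∈ ball (0 : ℂ) 1) :
    ‖q z + conj (q a)‖ ^ 2 * ((1 - ‖z‖ ^ 2) * (1 - ‖a‖ ^ 2)) ≤
      4 * (q z).re * (q a).re * ‖1 - conj a * z‖ ^ 2 := by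
  have hden : ∀ w ∈ ball (0 : ℂ) 1, q w + conj (q a) ≠ 0 := fun w hw h => by
    have := congrArg re h
    simp only [add_re, conj_re, zero_re] at this
    linarith [hre w hw, hre a ha]
  have hmaps : Set.MapsTo (diskMobius a) (ball 0 1) (ball 0 1) := fun _ hu =>
    diskMobius_mem_ball ha hu
  have hqφ : DifferentiableOn ℂ (fun u => q (diskMobius a u)) (ball 0 1) :=
    hq.comp (differentiableOn_diskMobius ha) hmaps
  set g : ℂ → ℂ := fun u => (q (diskMobius a u) - q a) / (q (diskMobius a u) + conj (q a))
  have hgd : DifferentiableOn ℂ g (ball 0 1) :=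
    (hqφ.sub_const _).div (hqφ.add_const _) fun u hu => hden _ (hmaps hu)
  have hg : Set.MapsTo g (ball 0 1) (closedBall 0 1) := fun u hu => by
    rw [mem_closedBall_zero_iff, norm_div, div_le_one (norm_pos_iff.2 (hden _ (hmaps hu)))]
    exact norm_sub_le_norm_add_conj_s1 (hre _ (hmaps hu)).le (hre a ha).le
  have hg0 : g 0 = 0 := by simp [g, diskMobius_zero]
  have hS := norm_le_norm_of_mapsTo_ball hgd hg hg0
    (mem_ball_zero_iff.1 (diskMobius_mem_ball (a := -a) (by simpa using ha) hz))
  simp only [g, diskMobius_diskMobius_neg ha hz] at hS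
  rw [diskMobius_neg, norm_div, norm_div, div_le_div_iff₀ (norm_pos_iff.2 (hden z hz))
    (norm_pos_iff.2 (one_sub_conj_mul_ne_zero_s1 ha hz))] at hS
  have hS2 := pow_le_pow_left₀ (by positivity) hS 2
  rw [mul_pow, mul_pow] at hS2
  nlinarith [sq_norm_add_conj_sub_sq_norm_sub (q z) (q a),
    sq_norm_one_sub_conj_mul_sub_sq_norm_sub a z]

theorem eqOn_const_of_re_nonneg_of_re_eq_zero {U : Set ℂ} (hU : IsPreconnected U) (ho : IsOpen U)
    {q : ℂ → ℂ} (hq : DifferentiableOn ℂ q U) (hre : ∀ z ∈ U, 0 ≤ (q z).re) {z₀ : ℂ}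
    (hz₀ : z₀ ∈ U) (h0 : (q z₀).re = 0) : Set.EqOn q (Function.const ℂ (q z₀)) U := by
  have hre1 : ∀ z ∈ U, 1 ≤ (1 + (q z - q z₀)).re := fun z hz => by
    simp only [add_re, sub_re, one_re, h0]; linarith [hre z hz]
  have hne : ∀ z ∈ U, 1 + (q z - q z₀) ≠ 0 := fun z hz h => absurd (hre1 z hz) (by simp [h])
  -- `1 / (1 + q - q z₀)` maps `U` into the closed unit disc and equals `1` at `z₀`
  have hmax : IsMaxOn (norm ∘ fun z => (1 + (q z - q z₀))⁻¹) U z₀ := fun z hz => by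
    simp only [Function.comp, sub_self, add_zero, inv_one, norm_one, Set.mem_ofPred_eq, norm_inv]
    exact inv_le_one_of_one_le₀ ((hre1 z hz).trans (re_le_norm _))
  intro z hz
  have := eqOn_of_isPreconnected_of_isMaxOn_norm hU ho
    (((hq.sub_const _).const_add 1).inv hne) hz₀ hmax hz
  simpa [sub_eq_zero] using this

lemma ofReal_mul_mem_ball {ζ : ℂ} (hζ : ‖ζ‖ = 1) {r : ℝ} (hr : r ∈ Set.Ioo 0 1) :
    (r : ℂ) * ζ ∈ ball (0 : ℂ) 1 := by
  rw [mem_ball_zero_iff, norm_mul, hζ, mul_one, norm_real, Real.norm_of_nonneg hr.1.le]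
  exact hr.2

lemma tendsto_ofReal_mul_nhdsWithin_stolzAngle {ζ : ℂ} (hζ : ‖ζ‖ = 1) {M : ℝ} (hM : 1 < M) :
    Tendsto (fun r : ℝ => (r : ℂ) * ζ) (𝓝[<] 1) (𝓝[StolzAngle ζ M] ζ) := by
  refine tendsto_nhdsWithin_iff.2 ⟨?_, ?_⟩
  · exact (Continuous.tendsto' (by fun_prop) 1 ζ (by simp)).mono_left nhdsWithin_le_nhds
  · filter_upwards [Ioo_mem_nhdsLT zero_lt_one] with r hr
    refine ⟨mem_ball_zero_iff.1 (ofReal_mul_mem_ball hζ hr), ?_⟩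
    have h1 : ζ - r * ζ = ((1 - r : ℝ) : ℂ) * ζ := by push_cast; ring
    rw [h1, norm_mul, hζ, mul_one, norm_real, Real.norm_of_nonneg (by linarith [hr.2]),
      norm_mul, hζ, mul_one, norm_real, Real.norm_of_nonneg hr.1.le]
    nlinarith [hr.2]

lemma norm_one_sub_conj_mul {ζ : ℂ} (hζ : ‖ζ‖ = 1) (z : ℂ) : ‖1 - conj ζ * z‖ = ‖ζ - z‖ := by
  have h : conj ζ * ζ = 1 := by
    rw [← normSq_eq_conj_mul_self, ← Complex.sq_norm, hζ]; norm_num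
  rw [← h, ← mul_sub, norm_mul, RCLike.norm_conj, hζ, one_mul]

/- Julia's lemma for maps into the right half-plane: Schwarz–Pick at `a = r ζ`, multiplied by
`1 - r`, passes to the limit `r → 1`. -/
theorem div_mul_le_re_of_tendsto {q : ℂ → ℂ} (hq : DifferentiableOn ℂ q (ball 0 1))
    (hre : ∀ z ∈ ball (0 : ℂ) 1, 0 < (q z).re) {ζ : ℂ} (hζ : ‖ζ‖ = 1) {c : ℝ} (hc : 0 < c)
    (hlim : Tendsto (fun r : ℝ => (1 - r) * q (r * ζ)) (𝓝[<] 1) (𝓝 c)) {z : ℂ}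
    (hz : z ∈ ball (0 : ℂ) 1) :
    c / 2 * ((1 - ‖z‖ ^ 2) / ‖ζ - z‖ ^ 2) ≤ (q z).re := by
  set Φ : ℝ × ℂ → ℝ := fun x => ‖(1 - x.1) * q z + conj x.2‖ ^ 2 * (1 - ‖z‖ ^ 2) * (1 + x.1) -
    4 * (q z).re * x.2.re * ‖1 - x.1 * conj ζ * z‖ ^ 2 with hΦ
  have hΦle : ∀ r ∈ Set.Ioo (0 : ℝ) 1, Φ (r, (1 - r) * q (r * ζ)) ≤ 0 := fun r hr => by
    have SP := sq_norm_add_conj_mul_le_of_re_pos hq hre hz (ofReal_mul_mem_ball hζ hr)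
    have hr' : ‖(r : ℂ) * ζ‖ = r := by
      rw [norm_mul, hζ, mul_one, norm_real, Real.norm_of_nonneg hr.1.le]
    rw [hr', map_mul, conj_ofReal] at SP
    have e1 : (1 - (r : ℂ)) * q z + conj ((1 - r) * q (r * ζ)) =
        ((1 - r : ℝ) : ℂ) * (q z + conj (q (r * ζ))) := by
      simp only [map_mul, map_sub, map_one, conj_ofReal]; push_cast; ring
    have e2 : ((1 - (r : ℂ)) * q (r * ζ)).re = (1 - r) * (q (r * ζ)).re := by
      rw [← re_ofReal_mul]; push_cast; rfl
    simp only [hΦ, e1, e2, norm_mul, norm_real, Real.norm_of_nonneg (sub_pos.2 hr.2).le, mul_pow]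
    nlinarith [mul_le_mul_of_nonneg_left SP (sub_pos.2 hr.2).le]
  have hlim' : Tendsto (fun r : ℝ => (r, (1 - r) * q (r * ζ))) (𝓝[<] 1) (𝓝 (1, (c : ℂ))) :=
    (tendsto_id.mono_left nhdsWithin_le_nhds).prodMk_nhds hlim
  have hΦ1 : Φ (1, c) ≤ 0 := le_of_tendsto (((by fun_prop : Continuous Φ).tendsto _).comp hlim')
    (by filter_upwards [Ioo_mem_nhdsLT zero_lt_one] with r hr using hΦle r hr)
  simp only [hΦ, ofReal_one, sub_self, zero_mul, zero_add, RCLike.norm_conj, norm_real,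
    Real.norm_of_nonneg hc.le, ofReal_re, one_mul, norm_one_sub_conj_mul hζ] at hΦ1
  have hzζ : ζ ≠ z := ne_of_apply_ne norm (hζ ▸ (mem_ball_zero_iff.1 hz).ne')
  rw [mul_div_assoc', div_le_iff₀ (pow_pos (norm_pos_iff.2 (sub_ne_zero.2 hzζ)) 2)]
  nlinarith

lemma re_pos_of_tendsto_one_sub_mul_inv {p : ℂ → ℂ} (hp : DifferentiableOn ℂ p (ball 0 1))
    (hre : ∀ z ∈ ball (0 : ℂ) 1, 0 ≤ (p z).re) {ζ : ℂ} (hζ : ‖ζ‖ = 1) {c : ℂ} (hc : c ≠ 0)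
    (hlim : Tendsto (fun r : ℝ => (1 - r) * (p (r * ζ))⁻¹) (𝓝[<] 1) (𝓝 c)) :
    ∀ z ∈ ball (0 : ℂ) 1, 0 < (p z).re := by
  intro z hz
  refine (hre z hz).lt_of_ne fun h => hc ?_
  have hconst := eqOn_const_of_re_nonneg_of_re_eq_zero (convex_ball 0 1).isPreconnected
    isOpen_ball hp hre hz h.symm
  have h0 : Tendsto (fun r : ℝ => (1 - r) * (p z)⁻¹) (𝓝[<] 1) (𝓝 0) :=
    (Continuous.tendsto' (by fun_prop) 1 0 (by simp)).mono_left nhdsWithin_le_nhds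
  refine tendsto_nhds_unique hlim (h0.congr' ?_)
  filter_upwards [Ioo_mem_nhdsLT zero_lt_one] with r hr
  rw [hconst (ofReal_mul_mem_ball hζ hr), Function.const_apply]

lemma sq_one_sub_div_self {ζ : ℂ} (hζ : ‖ζ‖ = 1) : (1 - ζ) ^ 2 / ζ = -((‖1 - ζ‖ ^ 2 : ℝ) : ℂ) := by
  have hζ0 : ζ ≠ 0 := ne_zero_of_norm_ne_zero (hζ ▸ one_ne_zero)
  have h : ζ * conj ζ = 1 := by rw [mul_conj', hζ]; norm_num
  rw [div_eq_iff hζ0]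
  push_cast
  rw [← mul_conj']
  simp only [map_sub, map_one]
  linear_combination (ζ - 1) * h

lemma tendsto_one_sub_mul_inv_of_angularLimit {p f : ℂ → ℂ} (hf : ∀ z, f z = -(1 - z) ^ 2 * p z)
    {ζ : ℂ} (hζ : ‖ζ‖ = 1) {L : ℂ} (hL : L ≠ 0)
    (hder : AngularLimit (fun z => f z / (z - ζ)) ζ L) :
    Tendsto (fun r : ℝ => (1 - r) * (p (r * ζ))⁻¹) (𝓝[<] 1) (𝓝 (-((‖1 - ζ‖ ^ 2 : ℝ) : ℂ) / L)) := by
  have hζ0 : ζ ≠ 0 := ne_zero_of_norm_ne_zero (hζ ▸ one_ne_zero)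
  have hrad := (hder 2 one_lt_two).comp (tendsto_ofReal_mul_nhdsWithin_stolzAngle hζ one_lt_two)
  have hlim : Tendsto (fun r : ℝ => (1 - r * ζ) ^ 2 / ζ * (f (r * ζ) / (r * ζ - ζ))⁻¹) (𝓝[<] 1)
      (𝓝 ((1 - ζ) ^ 2 / ζ * L⁻¹)) := by
    refine Tendsto.mul ?_ (hrad.inv₀ hL)
    exact (Continuous.tendsto' (by fun_prop) 1 _ (by simp)).mono_left nhdsWithin_le_nhds
  rw [← sq_one_sub_div_self hζ, div_eq_mul_inv _ L]
  refine hlim.congr' ?_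
  filter_upwards [Ioo_mem_nhdsLT zero_lt_one] with r hr
  have h1 : 1 - (r : ℂ) * ζ ≠ 0 := sub_ne_zero.2 <| ne_of_apply_ne norm <| by
    simpa using (mem_ball_zero_iff.1 (ofReal_mul_mem_ball hζ hr)).ne'
  rw [hf, inv_div, div_eq_mul_inv (↑r * ζ - ζ), mul_inv]
  field_simp
  ring

lemma re_mul_div_sub_of_norm_eq_one {ζ : ℂ} (hζ : ‖ζ‖ = 1) (z : ℂ) :
    ((z - 1) * (1 - ζ) / (z - ζ)).re = -(‖1 - ζ‖ ^ 2 / 2) * ((1 - ‖z‖ ^ 2) / ‖ζ - z‖ ^ 2) := by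
  have h : ζ.re ^ 2 + ζ.im ^ 2 = 1 := by
    have := congrArg (· ^ 2) hζ
    simp only [Complex.sq_norm, normSq_apply] at this
    linarith
  rw [div_re, norm_sub_rev ζ z]
  simp only [Complex.sq_norm, normSq_apply, sub_re, sub_im, mul_re, mul_im, one_re, one_im]
  rw [← add_div, mul_div_assoc']
  congr 1
  linear_combination (z.re - (z.re ^ 2 + z.im ^ 2) / 2 - 1 / 2) * h

lemma neg_sq_mul_sub_eq {z ζ P k : ℂ} (hz1 : z ≠ 1) (hzζ : z ≠ ζ) :
    -(z - 1) ^ 2 * (1 / (-(1 - z) ^ 2 * P) - k * (1 / (z - 1) - 1 / (z - ζ))) =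
      P⁻¹ + k * ((z - 1) * (1 - ζ) / (z - ζ)) := by
  rw [one_div, mul_inv]
  field_simp
  ring

theorem angularLimit_sub_mul_eq_zero {f G : ℂ → ℂ} {ζ : ℂ} (hζ : ‖ζ‖ = 1) (hζ1 : ζ ≠ 1) {m : ℝ}
    (hm : m < 0) (hder : AngularLimit (fun z => f z / (z - ζ)) ζ m)
    (hG : ∀ z, G z = 1 / f z - (1 / ((|m| : ℝ) : ℂ)) * (1 / (z - 1) - 1 / (z - ζ))) :
    AngularLimit (fun z => (z - ζ) * G z) ζ 0 := by
  intro M hM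
  have hm0 : (m : ℂ) ≠ 0 := by exact_mod_cast hm.ne
  have hval : (m : ℂ)⁻¹ - 1 / ((|m| : ℝ) : ℂ) * ((ζ - ζ) / (ζ - 1) - 1) = 0 := by
    rw [abs_of_neg hm]; push_cast; field_simp; ring
  have hcont : ContinuousAt (fun z => (z - ζ) / (z - 1) - 1) ζ :=
    ((continuousAt_id.sub continuousAt_const).div (continuousAt_id.sub continuousAt_const)
      (sub_ne_zero.2 hζ1)).sub continuousAt_const
  have hlim : Tendsto (fun z => (f z / (z - ζ))⁻¹ - 1 / ((|m| : ℝ) : ℂ) * ((z - ζ) / (z - 1) - 1))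
      (𝓝[StolzAngle ζ M] ζ) (𝓝 0) := by
    rw [← hval]
    exact ((hder M hM).inv₀ hm0).sub
      (tendsto_const_nhds.mul (hcont.tendsto.mono_left nhdsWithin_le_nhds))
  refine hlim.congr' ?_
  filter_upwards [self_mem_nhdsWithin] with z hz
  have hzζ : z - ζ ≠ 0 := sub_ne_zero.2 (ne_of_apply_ne norm (hζ ▸ hz.1.ne))
  rw [hG, inv_div]
  field_simp

/-- reduced (N = 1) separation step for a generator with
Denjoy–Wolff point 1. -/
theorem stmt1 (p : ℂ → ℂ)
    (hp : DifferentiableOn ℂ p (ball (0:ℂ) 1))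
    (hre : ∀ z ∈ ball (0:ℂ) 1, 0 ≤ (p z).re)
    (f : ℂ → ℂ) (hf : ∀ z, f z = -(1 - z)^2 * p z)
    (ζ : ℂ) (hζ : ‖ζ‖ = 1) (hζ1 : ζ ≠ 1)
    (m : ℝ) (hm : m < 0)
    (hder : AngularLimit (fun z => f z / (z - ζ)) ζ (m : ℂ))
    (G : ℂ → ℂ)
    (hG : ∀ z, G z = 1 / f z - (1 / ((|m| : ℝ) : ℂ)) * (1 / (z - 1) - 1 / (z - ζ))) :
    (∀ z ∈ ball (0:ℂ) 1, f z ≠ 0 → 0 ≤ (-(z - 1)^2 * G z).re) ∧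
      AngularLimit (fun z => (z - ζ) * G z) ζ 0 := by
  set c : ℝ := -‖1 - ζ‖ ^ 2 / m
  have hc : 0 < c :=
    div_pos_of_neg_of_neg (neg_neg_of_pos (pow_pos (norm_pos_iff.2 (sub_ne_zero.2 hζ1.symm)) 2)) hm
  have hlim : Tendsto (fun r : ℝ => (1 - r) * (p (r * ζ))⁻¹) (𝓝[<] 1) (𝓝 c) := by
    convert tendsto_one_sub_mul_inv_of_angularLimit hf hζ (ofReal_ne_zero.2 hm.ne) hder using 2
    push_cast [c]; rfl
  have hpos := re_pos_of_tendsto_one_sub_mul_inv hp hre hζ (ofReal_ne_zero.2 hc.ne') hlim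
  have hp0 : ∀ z ∈ ball (0 : ℂ) 1, p z ≠ 0 := fun z hz h => by simpa [h] using hpos z hz
  have hre_inv : ∀ z ∈ ball (0 : ℂ) 1, 0 < ((p z)⁻¹).re := fun z hz => by
    simpa [inv_re] using div_pos (hpos z hz) (normSq_pos.2 (hp0 z hz))
  refine ⟨fun z hz hfz => ?_, angularLimit_sub_mul_eq_zero hζ hζ1 hm hder hG⟩
  have hz1 : z ≠ 1 := by rintro rfl; simp [hf] at hfz
  have hzζ : z ≠ ζ := ne_of_apply_ne norm (hζ ▸ (mem_ball_zero_iff.1 hz).ne)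
  have hjulia := div_mul_le_re_of_tendsto (q := fun z => (p z)⁻¹) (hp.inv hp0) hre_inv hζ hc
    hlim hz
  have hk : 1 / ((|m| : ℝ) : ℂ) = ((-1 / m : ℝ) : ℂ) := by rw [abs_of_neg hm]; push_cast; ring
  rw [hG, hf, neg_sq_mul_sub_eq hz1 hzζ, hk, add_re, re_ofReal_mul,
    re_mul_div_sub_of_norm_eq_one hζ]
  have e : -1 / m * (-(‖1 - ζ‖ ^ 2 / 2) * ((1 - ‖z‖ ^ 2) / ‖ζ - z‖ ^ 2)) =
      -(c / 2 * ((1 - ‖z‖ ^ 2) / ‖ζ - z‖ ^ 2)) := by ring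
  linarith
end
end
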